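/- Let ρ be the infinite unfolding of a Clo proof of a sequent Γ, i.e. the Clo derivation obtained by inductively replacing each discharged assumption by the subderivation rooted at its companion. Replacing every clo rule in ρ by a ν-unfolding rule, removing all nodes labelled by exp, and erasing all annotations yields an NW derivation of Γ that is an NW proof: every infinite branch carries a ν-trace (given by the names occurring along the branch). -/
import Mathlib


set_option linter.unusedVariables false

/-! ## Formulas of the modal μ-calculus -/

inductive Formula : Type
  | prop  : ℕ → Formula
  | nprop : ℕ → Formula
  | var   : ℕ → Formula
  | or    : Formula → Formula → Formula
  | and   : Formula → Formula → Formula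
  | dia   : Formula → Formula
  | box   : Formula → Formula
  | mu    : ℕ → Formula → Formula
  | nu    : ℕ → Formula → Formula
  deriving DecidableEq

namespace Formula

/-- Free (formal) variables of a formula. -/
def freeVars : Formula → Finset ℕ
  | prop _ => ∅
  | nprop _ => ∅
  | var x => {x}
  | or a b => a.freeVars ∪ b.freeVars
  | and a b => a.freeVars ∪ b.freeVars
  | dia a => a.freeVars
  | box a => a.freeVars
  | mu x a => a.freeVars.erase x
  | nu x a => a.freeVars.erase x

/-- A formula is closed if every formal variable is bound. -/
def Closed (φ : Formula) : Prop := φ.freeVars = ∅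

/-- Substitution `φ[ψ/x]` (of a closed formula `ψ`, so capture is no issue). -/
def subst : Formula → ℕ → Formula → Formula
  | prop p, _, _ => prop p
  | nprop p, _, _ => nprop p
  | var y, x, ψ => if y = x then ψ else var y
  | or a b, x, ψ => or (a.subst x ψ) (b.subst x ψ)
  | and a b, x, ψ => and (a.subst x ψ) (b.subst x ψ)
  | dia a, x, ψ => dia (a.subst x ψ)
  | box a, x, ψ => box (a.subst x ψ)
  | mu y a, x, ψ => if y = x then mu y a else mu y (a.subst x ψ)
  | nu y a, x, ψ => if y = x then nu y a else nu y (a.subst x ψ)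

/-- The unfolding `φ[μx.φ]` of `μx.φ`. -/
def unfoldMu (x : ℕ) (φ : Formula) : Formula := φ.subst x (mu x φ)

/-- The unfolding `φ[νx.φ]` of `νx.φ`. -/
def unfoldNu (x : ℕ) (φ : Formula) : Formula := φ.subst x (nu x φ)

/-- `η x. φ` where `η = ν` if `isNu` and `η = μ` otherwise. -/
def eta (isNu : Bool) (x : ℕ) (φ : Formula) : Formula := if isNu then nu x φ else mu x φ

/-- The unfolding `φ[ηx.φ]` of `ηx.φ`. -/
def unfoldEta (isNu : Bool) (x : ℕ) (φ : Formula) : Formula :=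
  if isNu then unfoldNu x φ else unfoldMu x φ

/-- The negation (dual) of a formula. -/
def neg : Formula → Formula
  | prop p => nprop p
  | nprop p => prop p
  | var x => var x
  | or a b => and a.neg b.neg
  | and a b => or a.neg b.neg
  | dia a => box a.neg
  | box a => dia a.neg
  | mu x a => nu x a.neg
  | nu x a => mu x a.neg

end Formula

/-! ## Kripke semantics -/

/-- A Kripke model (transition system with a valuation). -/
structure Kripke (W : Type) where
  rel : W → W → Prop
  val : ℕ → W → Prop

/-- Semantics of a formula in a Kripke model, under an assignment `env` of state
sets to the formal variables; `μ` and `ν` are interpreted as the least and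
greatest fixpoints (given here by their Knaster–Tarski descriptions). -/
def sem {W : Type} (M : Kripke W) : Formula → (ℕ → Set W) → Set W
  | .prop p, _ => {w | M.val p w}
  | .nprop p, _ => {w | ¬ M.val p w}
  | .var x, env => env x
  | .or a b, env => sem M a env ∪ sem M b env
  | .and a b, env => sem M a env ∩ sem M b env
  | .dia a, env => {w | ∃ v, M.rel w v ∧ v ∈ sem M a env}
  | .box a, env => {w | ∀ v, M.rel w v → v ∈ sem M a env}
  | .mu x a, env => ⋂₀ {S : Set W | sem M a (Function.update env x S) ⊆ S}
  | .nu x a, env => ⋃₀ {S : Set W | S ⊆ sem M a (Function.update env x S)}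

/-- A sequent: a finite set of formulas (intended: closed formulas),
read disjunctively. -/
abbrev Sequent := Finset Formula

/-- All formulas of the sequent are closed. -/
def ClosedSeq (Γ : Sequent) : Prop := ∀ φ ∈ Γ, φ.Closed

/-- A sequent is valid if its disjunction holds at every state of every Kripke model. -/
def ValidSeq (Γ : Sequent) : Prop :=
  ∀ (W : Type) (M : Kripke W) (env : ℕ → Set W) (w : W), ∃ φ ∈ Γ, w ∈ sem M φ env

/-! ## Closure, subsumption, adisjunctivity -/

/-- The trace step relation `φ ⤳ ψ`. -/
inductive TStep : Formula → Formula → Prop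
  | orL (a b : Formula) : TStep (.or a b) a
  | orR (a b : Formula) : TStep (.or a b) b
  | andL (a b : Formula) : TStep (.and a b) a
  | andR (a b : Formula) : TStep (.and a b) b
  | dia (a : Formula) : TStep (.dia a) a
  | box (a : Formula) : TStep (.box a) a
  | mu (x : ℕ) (a : Formula) : TStep (.mu x a) (Formula.unfoldMu x a)
  | nu (x : ℕ) (a : Formula) : TStep (.nu x a) (Formula.unfoldNu x a)

/-- The closure of a sequent: least superset closed under `⤳`. -/
def Clos (Γ : Sequent) : Set Formula :=
  {ψ | ∃ φ ∈ Γ, Relation.ReflTransGen TStep φ ψ}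

/-- The subsumption order on formal variables (relative to an ambient sequent):
`x ≤ y` iff `x = y` or `x` occurs free in the (ηy.ψ)-formula binding `y`. -/
def VarLe (Γ : Sequent) (x y : ℕ) : Prop :=
  x = y ∨ ∃ (b : Bool) (φ : Formula),
    Formula.eta b y φ ∈ Clos Γ ∧ x ∈ (Formula.eta b y φ).freeVars

/-- Adisjunctivity of a sequent. -/
def Adisjunctive (Γ : Sequent) : Prop :=
  ∀ (x : ℕ) (φ : Formula), Formula.nu x φ ∈ Clos Γ →
    ∀ ψ₀ ψ₁ : Formula, Formula.or ψ₀ ψ₁ ∈ Clos {Formula.nu x φ} →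
      Formula.nu x φ ∉ Clos {ψ₀} ∨ Formula.nu x φ ∉ Clos {ψ₁}

/-! ## The proof system NW -/

/-- An instance of an NW rule (recording context and principal formula). -/
inductive NWRule : Type
  | ax (p : ℕ)
  | orR (Γ : Sequent) (φ ψ : Formula)
  | andR (Γ : Sequent) (φ ψ : Formula)
  | weak (Γ : Sequent) (φ : Formula)
  | boxR (Γ : Sequent) (φ : Formula)
  | unfold (Γ : Sequent) (isNu : Bool) (x : ℕ) (φ : Formula)

namespace NWRule

/-- Conclusion of a rule instance. -/
def concl : NWRule → Sequent
  | .ax p => {.prop p, .nprop p}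
  | .orR Γ φ ψ => insert (.or φ ψ) Γ
  | .andR Γ φ ψ => insert (.and φ ψ) Γ
  | .weak Γ φ => insert φ Γ
  | .boxR Γ φ => insert (.box φ) (Γ.image Formula.dia)
  | .unfold Γ b x φ => insert (Formula.eta b x φ) Γ

/-- Premises of a rule instance. -/
def prems : NWRule → List Sequent
  | .ax _ => []
  | .orR Γ φ ψ => [insert φ (insert ψ Γ)]
  | .andR Γ φ ψ => [insert φ Γ, insert ψ Γ]
  | .weak Γ _ => [Γ]
  | .boxR Γ φ => [insert φ Γ]
  | .unfold Γ b x φ => [insert (Formula.unfoldEta b x φ) Γ]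

/-- The descendant relation of a rule instance: `descends r i a b` holds if the
formula `b` in the `i`-th premise is a descendant of the formula `a` in the
conclusion. -/
def descends : NWRule → ℕ → Formula → Formula → Prop
  | .ax _, _, _, _ => False
  | .orR Γ φ ψ, _, a, b => (a = .or φ ψ ∧ (b = φ ∨ b = ψ)) ∨ (a ∈ Γ ∧ b = a)
  | .andR Γ φ ψ, i, a, b => (a = .and φ ψ ∧ b = (if i = 0 then φ else ψ)) ∨ (a ∈ Γ ∧ b = a)
  | .weak Γ _, _, a, b => a ∈ Γ ∧ b = a
  | .boxR Γ φ, _, a, b => (a = .box φ ∧ b = φ) ∨ (∃ c ∈ Γ, a = .dia c ∧ b = c)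
  | .unfold Γ isNu x φ, _, a, b =>
      (a = Formula.eta isNu x φ ∧ b = Formula.unfoldEta isNu x φ) ∨ (a ∈ Γ ∧ b = a)

end NWRule

/-- An NW derivation of `Δ`: a (possibly infinite) tree of nodes (addressed by
lists of child indices) respecting the NW rules, all of whose leaves are axioms
(the only rules without premises are axioms). -/
structure NWDeriv (Δ : Sequent) where
  tree : Set (List ℕ)
  root_mem : [] ∈ tree
  prefix_closed : ∀ u n, u ++ [n] ∈ tree → u ∈ tree
  rule : List ℕ → NWRule
  label : List ℕ → Sequent
  label_root : label [] = Δ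
  label_concl : ∀ u ∈ tree, label u = (rule u).concl
  child_iff : ∀ u ∈ tree, ∀ n : ℕ, (u ++ [n] ∈ tree ↔ n < (rule u).prems.length)
  label_child : ∀ u ∈ tree, ∀ n : ℕ, ∀ h : n < (rule u).prems.length,
      label (u ++ [n]) = (rule u).prems.get ⟨n, h⟩

/-- The node at depth `n` on the branch described by the sequence `f` of child
indices. -/
def branchNode (f : ℕ → ℕ) (n : ℕ) : List ℕ := (List.range n).map f

namespace NWDeriv

variable {Δ : Sequent}

/-- `f` describes an infinite branch of the derivation. -/
def IsBranch (π : NWDeriv Δ) (f : ℕ → ℕ) : Prop := ∀ n, branchNode f n ∈ π.tree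

/-- `g` is a trace on the branch `f` starting at depth `k`. -/
def IsTraceOn (π : NWDeriv Δ) (f : ℕ → ℕ) (k : ℕ) (g : ℕ → Formula) : Prop :=
  ∀ n, g n ∈ π.label (branchNode f (k + n)) ∧
    (π.rule (branchNode f (k + n))).descends (f (k + n)) (g n) (g (n + 1))

end NWDeriv

/-- The set of formulas occurring infinitely often in the sequence `g`. -/
def InfOcc (g : ℕ → Formula) : Set Formula := {φ | ∀ N, ∃ n ≥ N, g n = φ}

/-- `g` is a ν-trace: the subsumption-minimal fixpoint formula occurring
infinitely often on it (equivalently, the fixpoint formula occurring infinitely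
often whose closure contains every formula occurring infinitely often) is a
ν-formula. -/
def IsNuTraceSeq (g : ℕ → Formula) : Prop :=
  ∃ (x : ℕ) (φ : Formula), Formula.nu x φ ∈ InfOcc g ∧
    ∀ ψ ∈ InfOcc g, ψ ∈ Clos {Formula.nu x φ}

/-- An NW derivation is a proof if every infinite branch carries a ν-trace. -/
def NWDeriv.IsProof {Δ : Sequent} (π : NWDeriv Δ) : Prop :=
  ∀ f : ℕ → ℕ, π.IsBranch f → ∃ k g, π.IsTraceOn f k g ∧ IsNuTraceSeq g

/-- Finite traces inside a derivation: `TraceRT π u φ v ψ` says there is a trace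
from the formula `φ` at node `u` to the formula `ψ` at node `v`. -/
inductive NWDeriv.TraceRT {Δ : Sequent} (π : NWDeriv Δ) :
    List ℕ → Formula → List ℕ → Formula → Prop
  | refl (u : List ℕ) (φ : Formula) : NWDeriv.TraceRT π u φ u φ
  | step {u : List ℕ} {φ : Formula} {v : List ℕ} {ψ : Formula} {n : ℕ} {χ : Formula} :
      NWDeriv.TraceRT π u φ v ψ → v ++ [n] ∈ π.tree →
      (π.rule v).descends n ψ χ → NWDeriv.TraceRT π u φ (v ++ [n]) χ

/-! ## The concrete sequent Φ -/

/-- The propositional letter `p`. -/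
def pP : Formula := .prop 0
/-- The negated letter `p̄`. -/
def pN : Formula := .nprop 0
/-- `νy.□(p ∧ (□x ∨ ◇y))`, with `x` (variable 0) free. -/
def psiIn : Formula := .nu 1 (.box (.and pP (.or (.box (.var 0)) (.dia (.var 1)))))
/-- `◇(p̄ ∧ (□x ∨ ◇νy.□(p ∧ (□x ∨ ◇y))))`, the body of `νx.φ`. -/
def phiBody : Formula := .dia (.and pN (.or (.box (.var 0)) (.dia psiIn)))
/-- `νx.φ = νx.◇(p̄ ∧ (□x ∨ ◇νy.□(p ∧ (□x ∨ ◇y))))`. -/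
def nuX : Formula := .nu 0 phiBody
/-- `νy.ψ = νy.□(p ∧ (□νx.φ ∨ ◇y))`. -/
def nuY : Formula := psiIn.subst 0 nuX
/-- `□(p ∧ (□νx.φ ∨ ◇y))`, the body of `νy.ψ`. -/
def psiBody : Formula := .box (.and pP (.or (.box nuX) (.dia (.var 1))))
/-- The sequent `Φ = {νx.φ, νy.ψ}`. -/
def PhiSeq : Sequent := {nuX, nuY}
/-- `χ = □νx.φ ∨ ◇νy.ψ`. -/
def chi : Formula := .or (.box nuX) (.dia nuY)
/-- The unfolding `φ[νx.φ]`. -/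
def unfX : Formula := Formula.unfoldNu 0 phiBody
/-- The unfolding `ψ[νy.ψ]`. -/
def unfY : Formula := Formula.unfoldNu 1 psiBody

/-! ## Unfolding trees for NW proofs of Φ -/

namespace NWDeriv

/-- An unfolding node: a node labelled by the sequent Φ. -/
def UnfNode (π : NWDeriv PhiSeq) (u : List ℕ) : Prop := u ∈ π.tree ∧ π.label u = PhiSeq

/-- `v` is a child of `u` in the unfolding tree `T_π`. -/
def TChild (π : NWDeriv PhiSeq) (u v : List ℕ) : Prop :=
  π.UnfNode u ∧ π.UnfNode v ∧ u <+: v ∧ u ≠ v ∧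
    ∀ w, u <+: w → w <+: v → w ≠ u → w ≠ v → ¬ π.UnfNode w

/-- `v` is an x-node (child of `u` in `T_π`): no trace from `νy.ψ` at `u` to
`νx.φ` or `νy.ψ` at `v`. -/
def IsXNode (π : NWDeriv PhiSeq) (u v : List ℕ) : Prop :=
  π.TChild u v ∧ ¬ (π.TraceRT u nuY v nuX ∨ π.TraceRT u nuY v nuY)

/-- `v` is a y-node (child of `u` in `T_π`): no trace from `νx.φ` at `u` to
`νx.φ` or `νy.ψ` at `v`. -/
def IsYNode (π : NWDeriv PhiSeq) (u v : List ℕ) : Prop :=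
  π.TChild u v ∧ ¬ (π.TraceRT u nuX v nuX ∨ π.TraceRT u nuX v nuY)

end NWDeriv

/-! ## The annotated proof system Clo (optionally with cut) -/

/-- Names: `(x, i)` is the `i`-th name for the formal variable `x`. -/
abbrev Name := ℕ × ℕ
/-- Annotations: finite words of names. -/
abbrev Ann := List Name
/-- Annotated formulas `φ^a`. -/
abbrev AFormula := Formula × Ann
/-- Annotated sequents. -/
abbrev ASequent := Finset AFormula

/-- Erase the annotations of an annotated sequent. -/
def stripSeq (Δ : ASequent) : Sequent := Δ.image Prod.fst

/-- Equip each formula of a plain sequent with the empty annotation. -/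
def annSeq (Γ : Sequent) : ASequent := Γ.image (fun φ => (φ, ([] : Ann)))

/-- `a ≤ x`: every name in the annotation `a` is a name of a variable `≤ x`
in the subsumption order (relative to the ambient sequent `Γ₀`). -/
def AnnLe (Γ₀ : Sequent) (a : Ann) (x : ℕ) : Prop := ∀ m ∈ a, VarLe Γ₀ m.1 x

/-- The name `x'` does not appear in the annotated sequent `Δ`. -/
def NameFresh (x' : Name) (Δ : ASequent) : Prop := ∀ φa ∈ Δ, x' ∉ φa.2

/-- An instance of a rule of Clo (with cut), including the bookkeeping
constructor `asm` for discharged assumptions. -/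
inductive CloRule : Type
  | ax (p : ℕ)
  | orR (Γ : ASequent) (φ ψ : Formula) (a : Ann)
  | andR (Γ : ASequent) (φ ψ : Formula) (a : Ann)
  | weak (Γ : ASequent) (φ : Formula) (a : Ann)
  | boxR (Γ : ASequent) (φ : Formula) (a : Ann)
  | unfold (Γ : ASequent) (isNu : Bool) (x : ℕ) (φ : Formula) (a : Ann)
  | exp (l : List (Formula × Ann × Ann))
  | clo (Γ : ASequent) (x : ℕ) (φ : Formula) (a : Ann) (x' : Name)
  | asm (Γ : ASequent) (x : ℕ) (φ : Formula) (a : Ann) (x' : Name)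
  | cut (Γ : ASequent) (A : Formula)

namespace CloRule

/-- Conclusion of a rule instance. -/
def concl : CloRule → ASequent
  | .ax p => {(.prop p, []), (.nprop p, [])}
  | .orR Γ φ ψ a => insert (.or φ ψ, a) Γ
  | .andR Γ φ ψ a => insert (.and φ ψ, a) Γ
  | .weak Γ φ a => insert (φ, a) Γ
  | .boxR Γ φ a => insert (.box φ, a) (Γ.image (fun q => (Formula.dia q.1, q.2)))
  | .unfold Γ b x φ a => insert (Formula.eta b x φ, a) Γ
  | .exp l => (l.map (fun t => (t.1, t.2.2))).toFinset
  | .clo Γ x φ a _ => insert (.nu x φ, a) Γ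
  | .asm Γ x φ a x' => insert (.nu x φ, a ++ [x']) Γ
  | .cut Γ _ => Γ

/-- Premises of a rule instance (a discharged assumption is a leaf). -/
def prems : CloRule → List ASequent
  | .ax _ => []
  | .orR Γ φ ψ a => [insert (φ, a) (insert (ψ, a) Γ)]
  | .andR Γ φ ψ a => [insert (φ, a) Γ, insert (ψ, a) Γ]
  | .weak Γ _ _ => [Γ]
  | .boxR Γ φ a => [insert (φ, a) Γ]
  | .unfold Γ b x φ a => [insert (Formula.unfoldEta b x φ, a) Γ]
  | .exp l => [(l.map (fun t => (t.1, t.2.1))).toFinset]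
  | .clo Γ x φ a x' => [insert (Formula.unfoldNu x φ, a ++ [x']) Γ]
  | .asm _ _ _ _ _ => []
  | .cut Γ A => [insert (A, []) Γ, insert (A.neg, []) Γ]

/-- Side conditions of the rules, relative to the ambient plain sequent `Γ₀`
(used for the subsumption order). -/
def Ok (Γ₀ : Sequent) : CloRule → Prop
  | .unfold _ _ x _ a => AnnLe Γ₀ a x
  | .exp l => ∀ t ∈ l, List.Sublist t.2.1 t.2.2
  | .clo Γ x _ a x' => x'.1 = x ∧ AnnLe Γ₀ a x ∧ NameFresh x' Γ
  | .asm _ x _ _ x' => x'.1 = x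
  | .cut _ A => A.Closed
  | _ => True

/-- Is this rule an instance of exp? -/
def IsExp : CloRule → Prop
  | .exp _ => True
  | _ => False

/-- Is this rule a discharged assumption? -/
def IsAsm : CloRule → Prop
  | .asm _ _ _ _ _ => True
  | _ => False

/-- Is this rule a cut? -/
def IsCut : CloRule → Prop
  | .cut _ _ => True
  | _ => False

/-- The discharge token of a clo rule. -/
def cloToken : CloRule → Option Name
  | .clo _ _ _ _ x' => some x'
  | _ => none

/-- The descendant relation of a rule instance, on plain formulas. -/
def descends : CloRule → ℕ → Formula → Formula → Prop
  | .ax _, _, _, _ => False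
  | .orR Γ φ ψ _, _, c, d => (c = .or φ ψ ∧ (d = φ ∨ d = ψ)) ∨ ((∃ e ∈ Γ, c = e.1) ∧ d = c)
  | .andR Γ φ ψ _, i, c, d =>
      (c = .and φ ψ ∧ d = (if i = 0 then φ else ψ)) ∨ ((∃ e ∈ Γ, c = e.1) ∧ d = c)
  | .weak Γ _ _, _, c, d => (∃ e ∈ Γ, c = e.1) ∧ d = c
  | .boxR Γ φ _, _, c, d => (c = .box φ ∧ d = φ) ∨ (∃ e ∈ Γ, c = .dia e.1 ∧ d = e.1)
  | .unfold Γ b x φ _, _, c, d =>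
      (c = Formula.eta b x φ ∧ d = Formula.unfoldEta b x φ) ∨ ((∃ e ∈ Γ, c = e.1) ∧ d = c)
  | .exp l, _, c, d => (∃ t ∈ l, c = t.1) ∧ d = c
  | .clo Γ x φ _ _, _, c, d =>
      (c = .nu x φ ∧ d = Formula.unfoldNu x φ) ∨ ((∃ e ∈ Γ, c = e.1) ∧ d = c)
  | .asm _ _ _ _ _, _, _, _ => False
  | .cut Γ _, _, c, d => (∃ e ∈ Γ, c = e.1) ∧ d = c

end CloRule

/-- A Clo derivation of the annotated sequent `Δ₀` (a possibly infinite tree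
respecting the rules of Clo, whose leaves are axioms or discharged
assumptions).  If `cut = false` the cut rule is not allowed. -/
structure CloDeriv (cut : Bool) (Δ₀ : ASequent) where
  tree : Set (List ℕ)
  root_mem : [] ∈ tree
  prefix_closed : ∀ u n, u ++ [n] ∈ tree → u ∈ tree
  rule : List ℕ → CloRule
  label : List ℕ → ASequent
  label_root : label [] = Δ₀
  label_concl : ∀ u ∈ tree, label u = (rule u).concl
  child_iff : ∀ u ∈ tree, ∀ n : ℕ, (u ++ [n] ∈ tree ↔ n < (rule u).prems.length)
  label_child : ∀ u ∈ tree, ∀ n : ℕ, ∀ h : n < (rule u).prems.length,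
      label (u ++ [n]) = (rule u).prems.get ⟨n, h⟩
  ok : ∀ u ∈ tree, (rule u).Ok (stripSeq Δ₀)
  cut_ok : ∀ u ∈ tree, (rule u).IsCut → cut = true
  token_unique : ∀ u ∈ tree, ∀ v ∈ tree, ∀ x' : Name,
      (rule u).cloToken = some x' → (rule v).cloToken = some x' → u = v
  discharged : ∀ u ∈ tree, ∀ (Γ : ASequent) (x : ℕ) (φ : Formula) (a : Ann) (x' : Name),
      rule u = .asm Γ x φ a x' →
      ∃ v, v <+: u ∧ v ≠ u ∧ v ∈ tree ∧ rule v = .clo Γ x φ a x'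

namespace CloDeriv

variable {c : Bool} {Δ₀ : ASequent}

/-- Finite traces (of plain formulas) inside a Clo derivation. -/
inductive TraceRT (ρ : CloDeriv c Δ₀) : List ℕ → Formula → List ℕ → Formula → Prop
  | refl (u : List ℕ) (φ : Formula) : TraceRT ρ u φ u φ
  | step {u : List ℕ} {φ : Formula} {v : List ℕ} {ψ : Formula} {n : ℕ} {χ : Formula} :
      TraceRT ρ u φ v ψ → v ++ [n] ∈ ρ.tree →
      (ρ.rule v).descends n ψ χ → TraceRT ρ u φ (v ++ [n]) χ

end CloDeriv

/-- A Clo derivation of the plain sequent `Φ` (all annotations at the root empty). -/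
abbrev CloDerivPhi := CloDeriv false (annSeq PhiSeq)

namespace CloDeriv

/-- Unfolding node of a Clo derivation of Φ: labelled by (an annotated version
of) the sequent Φ and not by the rule exp. -/
def UnfNode (ρ : CloDerivPhi) (u : List ℕ) : Prop :=
  u ∈ ρ.tree ∧ stripSeq (ρ.label u) = PhiSeq ∧ ¬ (ρ.rule u).IsExp

/-- `v` is a child of `u` in the unfolding tree `T_ρ`. -/
def TChild (ρ : CloDerivPhi) (u v : List ℕ) : Prop :=
  ρ.UnfNode u ∧ ρ.UnfNode v ∧ u <+: v ∧ u ≠ v ∧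
    ∀ w, u <+: w → w <+: v → w ≠ u → w ≠ v → ¬ ρ.UnfNode w

/-- `v` is an x-node (child of `u` in `T_ρ`). -/
def IsXNode (ρ : CloDerivPhi) (u v : List ℕ) : Prop :=
  ρ.TChild u v ∧ ¬ (ρ.TraceRT u nuY v nuX ∨ ρ.TraceRT u nuY v nuY)

/-- `v` is a y-node (child of `u` in `T_ρ`). -/
def IsYNode (ρ : CloDerivPhi) (u v : List ℕ) : Prop :=
  ρ.TChild u v ∧ ¬ (ρ.TraceRT u nuX v nuX ∨ ρ.TraceRT u nuX v nuY)

/-- A root-like unfolding node: no node in the subtree rooted at `u` is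
discharged by a clo rule applied at a proper ancestor of `u`. -/
def RootLike (ρ : CloDerivPhi) (u : List ℕ) : Prop :=
  ρ.UnfNode u ∧ ∀ w ∈ ρ.tree, u <+: w →
    ∀ (Γ : ASequent) (x : ℕ) (φ : Formula) (a : Ann) (x' : Name),
      ρ.rule w = .asm Γ x φ a x' →
      ∀ v ∈ ρ.tree, (ρ.rule v).cloToken = some x' → ¬ (v <+: u ∧ v ≠ u)

end CloDeriv

/-! ## Obtaining Clo derivations from NW proofs -/

/-- Erasing annotations from a Clo rule instance gives an NW rule instance
(clo becomes a ν-unfolding); exp and discharged assumptions are erased. -/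
def CloRule.strip : CloRule → Option NWRule
  | .ax p => some (.ax p)
  | .orR Γ φ ψ _ => some (.orR (stripSeq Γ) φ ψ)
  | .andR Γ φ ψ _ => some (.andR (stripSeq Γ) φ ψ)
  | .weak Γ φ _ => some (.weak (stripSeq Γ) φ)
  | .boxR Γ φ _ => some (.boxR (stripSeq Γ) φ)
  | .unfold Γ b x φ _ => some (.unfold (stripSeq Γ) b x φ)
  | .exp _ => none
  | .clo Γ x φ _ _ => some (.unfold (stripSeq Γ) true x φ)
  | .asm _ _ _ _ _ => none
  | .cut _ _ => none

/-- `ρ` is obtained from the NW proof `π` by changing some ν-unfoldings into clo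
rules with discharged assumptions (pruning the tree there) and adding
annotations and exp rules: witnessed by a structure-preserving map `e` from the
nodes of `ρ` to the nodes of `π` that collapses the inserted exp nodes, matches
the labels up to annotations, and matches the rules up to annotations (with clo
read as ν-unfolding). -/
def Obtains {Γ : Sequent} (π : NWDeriv Γ) (ρ : CloDeriv false (annSeq Γ)) : Prop :=
  ∃ e : List ℕ → List ℕ,
    e [] = [] ∧
    (∀ u ∈ ρ.tree, e u ∈ π.tree) ∧
    (∀ u ∈ ρ.tree, stripSeq (ρ.label u) = π.label (e u)) ∧
    (∀ u ∈ ρ.tree, (ρ.rule u).IsExp → e (u ++ [0]) = e u) ∧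
    (∀ u ∈ ρ.tree, ¬ (ρ.rule u).IsExp → ∀ n : ℕ, u ++ [n] ∈ ρ.tree →
        e (u ++ [n]) = e u ++ [n]) ∧
    (∀ u ∈ ρ.tree, ∀ r : NWRule, (ρ.rule u).strip = some r → π.rule (e u) = r)

/-! ## The infinite unfolding of a Clo proof -/

/-- `Resolves u w`: in the infinite unfolding with exp nodes removed, the node
`u` of the original Clo derivation is represented by the node `w`, obtained by
skipping exp rules and replacing discharged assumptions by their companions. -/
inductive CloDeriv.Resolves {c : Bool} {Δ₀ : ASequent} (ρ : CloDeriv c Δ₀) :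
    List ℕ → List ℕ → Prop
  | base {u : List ℕ} : u ∈ ρ.tree → ¬ (ρ.rule u).IsExp → ¬ (ρ.rule u).IsAsm →
      CloDeriv.Resolves ρ u u
  | exp {u w : List ℕ} : u ∈ ρ.tree → (ρ.rule u).IsExp →
      CloDeriv.Resolves ρ (u ++ [0]) w → CloDeriv.Resolves ρ u w
  | asm {u v w : List ℕ} {Γ : ASequent} {x : ℕ} {φ : Formula} {a : Ann} {x' : Name} :
      u ∈ ρ.tree → ρ.rule u = .asm Γ x φ a x' →
      v ∈ ρ.tree → (ρ.rule v).cloToken = some x' →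
      CloDeriv.Resolves ρ v w → CloDeriv.Resolves ρ u w

/-- `π` is the NW derivation obtained from the infinite unfolding of the Clo
derivation `ρ` by replacing clo rules by ν-unfoldings, removing exp nodes and
erasing all annotations: witnessed by a map `f` sending each node of `π` to the
node of `ρ` it comes from, commuting with the resolution of exp nodes and of
discharged assumptions by their companions. -/
def IsUnfoldedStrip {Γ : Sequent} (ρ : CloDeriv false (annSeq Γ)) (π : NWDeriv Γ) : Prop :=
  ∃ f : List ℕ → List ℕ,
    ρ.Resolves [] (f []) ∧
    (∀ u ∈ π.tree, f u ∈ ρ.tree) ∧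
    (∀ u ∈ π.tree, stripSeq (ρ.label (f u)) = π.label u) ∧
    (∀ u ∈ π.tree, (ρ.rule (f u)).strip = some (π.rule u)) ∧
    (∀ u ∈ π.tree, ∀ n : ℕ, u ++ [n] ∈ π.tree → ρ.Resolves (f u ++ [n]) (f (u ++ [n])))


/-! ## Auxiliary lemmas for Statement 10 -/

section Aux10

lemma mem_stripSeq {Δ : ASequent} {ψ : Formula} {b : Ann} (h : (ψ, b) ∈ Δ) :
    ψ ∈ stripSeq Δ := Finset.mem_image_of_mem Prod.fst h

/-- Erasing annotations preserves the descendant relation. -/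
lemma strip_descends {R : CloRule} {r : NWRule} (h : R.strip = some r)
    {m : ℕ} {a b : Formula} (hd : R.descends m a b) : r.descends m a b := by
  cases R with
  | ax p => exact hd.elim
  | orR Γ φ ψ an =>
      simp only [CloRule.strip, Option.some.injEq] at h; subst h
      rcases hd with ⟨h1, h2⟩ | ⟨⟨e, he, h1⟩, h2⟩
      · exact Or.inl ⟨h1, h2⟩
      · exact Or.inr ⟨h1 ▸ mem_stripSeq (b := e.2) (by simpa using he), h2⟩
  | andR Γ φ ψ an =>
      simp only [CloRule.strip, Option.some.injEq] at h; subst h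
      rcases hd with ⟨h1, h2⟩ | ⟨⟨e, he, h1⟩, h2⟩
      · exact Or.inl ⟨h1, h2⟩
      · exact Or.inr ⟨h1 ▸ mem_stripSeq (b := e.2) (by simpa using he), h2⟩
  | weak Γ φ an =>
      simp only [CloRule.strip, Option.some.injEq] at h; subst h
      rcases hd with ⟨⟨e, he, h1⟩, h2⟩
      exact ⟨h1 ▸ mem_stripSeq (b := e.2) (by simpa using he), h2⟩
  | boxR Γ φ an =>
      simp only [CloRule.strip, Option.some.injEq] at h; subst h
      rcases hd with ⟨h1, h2⟩ | ⟨e, he, h1, h2⟩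
      · exact Or.inl ⟨h1, h2⟩
      · exact Or.inr ⟨e.1, mem_stripSeq (b := e.2) (by simpa using he), h1, h2⟩
  | unfold Γ isNu x φ an =>
      simp only [CloRule.strip, Option.some.injEq] at h; subst h
      rcases hd with ⟨h1, h2⟩ | ⟨⟨e, he, h1⟩, h2⟩
      · exact Or.inl ⟨h1, h2⟩
      · exact Or.inr ⟨h1 ▸ mem_stripSeq (b := e.2) (by simpa using he), h2⟩
  | exp l => simp [CloRule.strip] at h
  | clo Γ x φ an x' =>
      simp only [CloRule.strip, Option.some.injEq] at h; subst h
      rcases hd with ⟨h1, h2⟩ | ⟨⟨e, he, h1⟩, h2⟩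
      · exact Or.inl ⟨by simpa [Formula.eta] using h1, by simpa [Formula.unfoldEta] using h2⟩
      · exact Or.inr ⟨h1 ▸ mem_stripSeq (b := e.2) (by simpa using he), h2⟩
  | asm Γ x φ an x' => simp [CloRule.strip] at h
  | cut Γ A => simp [CloRule.strip] at h

/-- The NW descendant relation is given by equality or a trace step. -/
lemma nw_descends_tstep {r : NWRule} {m : ℕ} {a b : Formula}
    (h : r.descends m a b) : b = a ∨ TStep a b := by
  cases r with
  | ax p => exact h.elim
  | orR Γ φ ψ =>
      rcases h with ⟨rfl, rfl | rfl⟩ | ⟨-, rfl⟩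
      · exact Or.inr (TStep.orL _ _)
      · exact Or.inr (TStep.orR _ _)
      · exact Or.inl rfl
  | andR Γ φ ψ =>
      rcases h with ⟨rfl, rfl⟩ | ⟨-, rfl⟩
      · by_cases hm : m = 0 <;> simp [hm] <;>
          [exact Or.inr (TStep.andL _ _); exact Or.inr (TStep.andR _ _)]
      · exact Or.inl rfl
  | weak Γ φ => exact Or.inl h.2
  | boxR Γ φ =>
      rcases h with ⟨rfl, rfl⟩ | ⟨c, -, rfl, rfl⟩
      · exact Or.inr (TStep.box _)
      · exact Or.inr (TStep.dia _)
  | unfold Γ isNu x φ =>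
      rcases h with ⟨rfl, rfl⟩ | ⟨-, rfl⟩
      · cases isNu
        · exact Or.inr (by simpa [Formula.eta, Formula.unfoldEta] using TStep.mu x φ)
        · exact Or.inr (by simpa [Formula.eta, Formula.unfoldEta] using TStep.nu x φ)
      · exact Or.inl rfl

/-- Pulling a carrier of the name `x'` in a premise back through a (stripped)
rule of `Clo`. -/
lemma clo_pullback {R : CloRule} {r : NWRule} (h : R.strip = some r) (x' : Name)
    (m : ℕ) (hm : m < R.prems.length) {ψ' : Formula} {b' : Ann}
    (hmem : (ψ', b') ∈ R.prems.get ⟨m, hm⟩) (hx : x' ∈ b') :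
    ∃ ψ b, (ψ, b) ∈ R.concl ∧ R.descends m ψ ψ' ∧
      (x' ∈ b ∨ ∃ Γ z χ c, R = .clo Γ z χ c x' ∧ ψ = .nu z χ ∧ b = c) := by
  cases R with
  | ax p => simp [CloRule.prems] at hm
  | orR Γ φ ψ an =>
      have hm0 : m = 0 := by simpa [CloRule.prems] using hm
      subst hm0
      simp only [CloRule.prems, List.get] at hmem
      rcases Finset.mem_insert.1 hmem with heq | hmem2
      · obtain ⟨rfl, rfl⟩ := Prod.ext_iff.1 heq.symm
        exact ⟨.or φ ψ, an, Finset.mem_insert_self _ _,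
          Or.inl ⟨rfl, Or.inl rfl⟩, Or.inl hx⟩
      rcases Finset.mem_insert.1 hmem2 with heq | hmem3
      · obtain ⟨rfl, rfl⟩ := Prod.ext_iff.1 heq.symm
        exact ⟨.or φ ψ, an, Finset.mem_insert_self _ _,
          Or.inl ⟨rfl, Or.inr rfl⟩, Or.inl hx⟩
      · exact ⟨ψ', b', Finset.mem_insert_of_mem hmem3,
          Or.inr ⟨⟨(ψ', b'), hmem3, rfl⟩, rfl⟩, Or.inl hx⟩
  | andR Γ φ ψ an =>
      have hm01 : m = 0 ∨ m = 1 := by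
        have := hm; simp [CloRule.prems] at this; omega
      rcases hm01 with rfl | rfl
      · simp only [CloRule.prems, List.get] at hmem
        rcases Finset.mem_insert.1 hmem with heq | hmem2
        · obtain ⟨rfl, rfl⟩ := Prod.ext_iff.1 heq.symm
          exact ⟨.and φ ψ, an, Finset.mem_insert_self _ _,
            Or.inl ⟨rfl, by simp⟩, Or.inl hx⟩
        · exact ⟨ψ', b', Finset.mem_insert_of_mem hmem2,
            Or.inr ⟨⟨(ψ', b'), hmem2, rfl⟩, rfl⟩, Or.inl hx⟩
      · simp only [CloRule.prems, List.get] at hmem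
        rcases Finset.mem_insert.1 hmem with heq | hmem2
        · obtain ⟨rfl, rfl⟩ := Prod.ext_iff.1 heq.symm
          exact ⟨.and φ ψ, an, Finset.mem_insert_self _ _,
            Or.inl ⟨rfl, by simp⟩, Or.inl hx⟩
        · exact ⟨ψ', b', Finset.mem_insert_of_mem hmem2,
            Or.inr ⟨⟨(ψ', b'), hmem2, rfl⟩, rfl⟩, Or.inl hx⟩
  | weak Γ φ an =>
      have hm0 : m = 0 := by simpa [CloRule.prems] using hm
      subst hm0
      simp only [CloRule.prems, List.get] at hmem
      exact ⟨ψ', b', Finset.mem_insert_of_mem hmem,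
        ⟨⟨(ψ', b'), hmem, rfl⟩, rfl⟩, Or.inl hx⟩
  | boxR Γ φ an =>
      have hm0 : m = 0 := by simpa [CloRule.prems] using hm
      subst hm0
      simp only [CloRule.prems, List.get] at hmem
      rcases Finset.mem_insert.1 hmem with heq | hmem2
      · obtain ⟨rfl, rfl⟩ := Prod.ext_iff.1 heq.symm
        exact ⟨.box φ, an, Finset.mem_insert_self _ _,
          Or.inl ⟨rfl, rfl⟩, Or.inl hx⟩
      · refine ⟨.dia ψ', b', ?_, Or.inr ⟨(ψ', b'), hmem2, rfl, rfl⟩, Or.inl hx⟩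
        exact Finset.mem_insert_of_mem
          (Finset.mem_image_of_mem (fun q => (Formula.dia q.1, q.2)) hmem2)
  | unfold Γ isNu x φ an =>
      have hm0 : m = 0 := by simpa [CloRule.prems] using hm
      subst hm0
      simp only [CloRule.prems, List.get] at hmem
      rcases Finset.mem_insert.1 hmem with heq | hmem2
      · obtain ⟨rfl, rfl⟩ := Prod.ext_iff.1 heq.symm
        exact ⟨Formula.eta isNu x φ, an, Finset.mem_insert_self _ _,
          Or.inl ⟨rfl, rfl⟩, Or.inl hx⟩
      · exact ⟨ψ', b', Finset.mem_insert_of_mem hmem2,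
          Or.inr ⟨⟨(ψ', b'), hmem2, rfl⟩, rfl⟩, Or.inl hx⟩
  | exp l => simp [CloRule.strip] at h
  | clo Γ z χ c y' =>
      have hm0 : m = 0 := by simpa [CloRule.prems] using hm
      subst hm0
      simp only [CloRule.prems, List.get] at hmem
      rcases Finset.mem_insert.1 hmem with heq | hmem2
      · obtain ⟨rfl, rfl⟩ := Prod.ext_iff.1 heq.symm
        refine ⟨.nu z χ, c, Finset.mem_insert_self _ _, Or.inl ⟨rfl, rfl⟩, ?_⟩
        rcases List.mem_append.1 hx with hc | hy
        · exact Or.inl hc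
        · have : x' = y' := by simpa using hy
          subst this
          exact Or.inr ⟨Γ, z, χ, c, rfl, rfl, rfl⟩
      · exact ⟨ψ', b', Finset.mem_insert_of_mem hmem2,
          Or.inr ⟨⟨(ψ', b'), hmem2, rfl⟩, rfl⟩, Or.inl hx⟩
  | asm Γ z χ c y' => simp [CloRule.strip] at h
  | cut Γ A => simp [CloRule.strip] at h

lemma cloToken_inv {r : CloRule} {x' : Name} (h : r.cloToken = some x') :
    ∃ Γ x φ a, r = .clo Γ x φ a x' := by
  cases r <;> simp [CloRule.cloToken] at h
  case clo Γ x φ a y => exact ⟨Γ, x, φ, a, by rw [h]⟩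

namespace CloDeriv

variable {c : Bool} {Δ₀ : ASequent} {ρ : CloDeriv c Δ₀}

lemma label_child' (ρ : CloDeriv c Δ₀) {u : List ℕ} (hu : u ∈ ρ.tree)
    {R : CloRule} (hR : ρ.rule u = R) (n : ℕ) (h : n < R.prems.length) :
    ρ.label (u ++ [n]) = R.prems.get ⟨n, h⟩ := by
  subst hR; exact ρ.label_child u hu n h

lemma child_iff' (ρ : CloDeriv c Δ₀) {u : List ℕ} (hu : u ∈ ρ.tree)
    {R : CloRule} (hR : ρ.rule u = R) (n : ℕ) :
    (u ++ [n] ∈ ρ.tree ↔ n < R.prems.length) := by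
  subst hR; exact ρ.child_iff u hu n

lemma resolves_head {u w : List ℕ} (h : ρ.Resolves u w) : u ∈ ρ.tree := by
  cases h <;> assumption

lemma resolves_end_eq {u w : List ℕ} (h : ρ.Resolves u w)
    (hne : ¬ (ρ.rule u).IsExp) (hna : ¬ (ρ.rule u).IsAsm) : w = u := by
  cases h with
  | base => rfl
  | exp h1 h2 => exact absurd h2 hne
  | asm h1 h2 => rw [h2] at hna; exact absurd trivial hna

lemma resolves_end_mem {u w : List ℕ} (h : ρ.Resolves u w) : w ∈ ρ.tree := by
  induction h with
  | base hu => exact hu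
  | exp _ _ _ ih => exact ih
  | asm _ _ _ _ _ ih => exact ih

/-- Structure of a resolution step: either only exp rules are skipped (and we
move to a descendant), or a discharged assumption is replaced by its
companion. -/
lemma resolves_cases {u w : List ℕ} (h : ρ.Resolves u w) :
    u <+: w ∨
    ∃ (u₀ : List ℕ) (Γ : ASequent) (x : ℕ) (φ : Formula) (a : Ann) (x' : Name),
      u <+: u₀ ∧ u₀ ∈ ρ.tree ∧ ρ.rule u₀ = .asm Γ x φ a x' ∧
      w <+: u₀ ∧ w ∈ ρ.tree ∧ ρ.rule w = .clo Γ x φ a x' := by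
  induction h with
  | base hu => exact Or.inl (List.prefix_refl _)
  | @exp u w hu hex hr ih =>
      have hpre : u <+: u ++ [0] := ⟨[0], rfl⟩
      rcases ih with hp | ⟨u₀, Γ, x, φ, a, x', h1, h2, h3, h4, h5, h6⟩
      · exact Or.inl (hpre.trans hp)
      · exact Or.inr ⟨u₀, Γ, x, φ, a, x', hpre.trans h1, h2, h3, h4, h5, h6⟩
  | @asm u v w Γ x φ a x' hu hru hv hcv hr ih =>
      obtain ⟨v₀, hpre₀, hne₀, hv₀t, hrv₀⟩ := ρ.discharged u hu Γ x φ a x' hru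
      have hvv₀ : v = v₀ := ρ.token_unique v hv v₀ hv₀t x' hcv (by rw [hrv₀]; rfl)
      have hrvclo : ρ.rule v = .clo Γ x φ a x' := by rw [hvv₀]; exact hrv₀
      have hprev : v <+: u := by rw [hvv₀]; exact hpre₀
      have hw : w = v := resolves_end_eq hr
        (by rw [hrvclo]; simp [CloRule.IsExp]) (by rw [hrvclo]; simp [CloRule.IsAsm])
      subst hw
      exact Or.inr ⟨u, Γ, x, φ, a, x', List.prefix_refl _, hu, hru, hprev, hv, hrvclo⟩

/-- Carriers of the distinguished name are preserved, backwards, along a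
resolution that starts strictly below the distinguished clo node. -/
lemma resolves_carrier {vs : List ℕ} {Γ₀ : ASequent} {x₀ : ℕ} {φ₀ : Formula}
    {a₀ : Ann} {x₀' : Name}
    (hrv : ρ.rule vs = .clo Γ₀ x₀ φ₀ a₀ x₀') (hfresh : NameFresh x₀' Γ₀)
    {u w : List ℕ} (h : ρ.Resolves u w) :
    vs <+: u → u ≠ vs →
    ∀ ψ : Formula,
      ((∃ b, (ψ, b) ∈ ρ.label w ∧ x₀' ∈ b) ∨ (w = vs ∧ ψ = .nu x₀ φ₀)) →
      ∃ b, (ψ, b) ∈ ρ.label u ∧ x₀' ∈ b := by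
  induction h with
  | base hu hne hna =>
      intro hpre hneq ψ hψ
      rcases hψ with ⟨b, hb⟩ | ⟨rfl, -⟩
      · exact ⟨b, hb⟩
      · exact absurd rfl hneq
  | @exp u w hu hex hr ih =>
      intro hpre hneq ψ hψ
      have h1 : vs <+: u ++ [0] := hpre.trans ⟨[0], rfl⟩
      have h2 : u ++ [0] ≠ vs := by
        intro hc
        have hle := hpre.length_le
        rw [← hc, List.length_append] at hle
        simp at hle
      obtain ⟨b, hb, hx⟩ := ih h1 h2 ψ hψ
      obtain ⟨l, hl⟩ : ∃ l, ρ.rule u = .exp l := by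
        cases hcase : ρ.rule u <;>
          first
          | exact ⟨_, rfl⟩
          | (rw [hcase] at hex; simp [CloRule.IsExp] at hex)
      have hlab0 : ρ.label (u ++ [0]) =
          (l.map (fun t => (t.1, t.2.1))).toFinset :=
        ρ.label_child' hu hl 0 (by simp [CloRule.prems])
      rw [hlab0, List.mem_toFinset, List.mem_map] at hb
      obtain ⟨t, ht, hteq⟩ := hb
      have hsub : List.Sublist t.2.1 t.2.2 := by
        have hok := ρ.ok u hu
        rw [hl] at hok
        exact hok t ht
      have hx2 : x₀' ∈ t.2.2 := hsub.subset (by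
        have : t.2.1 = b := congrArg Prod.snd hteq
        rw [this]; exact hx)
      have hψeq : t.1 = ψ := congrArg Prod.fst hteq
      refine ⟨t.2.2, ?_, hx2⟩
      rw [ρ.label_concl u hu, hl]
      simp only [CloRule.concl, List.mem_toFinset, List.mem_map]
      exact ⟨t, ht, by rw [hψeq]⟩
  | @asm u v w Γ x φ a x' hu hru hv hcv hr ih =>
      intro hpre hneq ψ hψ
      obtain ⟨v₀, hpre₀, hne₀, hv₀t, hrv₀⟩ := ρ.discharged u hu Γ x φ a x' hru
      have hvv₀ : v = v₀ := ρ.token_unique v hv v₀ hv₀t x' hcv (by rw [hrv₀]; rfl)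
      have hrvclo : ρ.rule v = .clo Γ x φ a x' := by rw [hvv₀]; exact hrv₀
      have hw : w = v := resolves_end_eq hr
        (by rw [hrvclo]; simp [CloRule.IsExp]) (by rw [hrvclo]; simp [CloRule.IsAsm])
      subst hw
      have hlabu : ρ.label u = insert (Formula.nu x φ, a ++ [x']) Γ := by
        rw [ρ.label_concl u hu, hru]; rfl
      have hlabv : ρ.label w = insert (Formula.nu x φ, a) Γ := by
        rw [ρ.label_concl w hv, hrvclo]; rfl
      by_cases hveq : w = vs
      · subst hveq
        rw [hrvclo] at hrv
        obtain ⟨hΓ, hx, hφ, ha, hx'⟩ : Γ = Γ₀ ∧ x = x₀ ∧ φ = φ₀ ∧ a = a₀ ∧ x' = x₀' := by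
          injection hrv with h1 h2 h3 h4 h5
          exact ⟨h1, h2, h3, h4, h5⟩
        subst hΓ; subst hx; subst hφ; subst ha; subst hx'
        rcases hψ with ⟨b, hb, hxb⟩ | ⟨-, rfl⟩
        · rw [hlabv] at hb
          rcases Finset.mem_insert.1 hb with heq | hbΓ
          · obtain ⟨rfl, rfl⟩ := Prod.ext_iff.1 heq.symm
            refine ⟨a ++ [x'], ?_, List.mem_append.2 (Or.inl hxb)⟩
            rw [hlabu]; exact Finset.mem_insert_self _ _
          · exact ⟨b, by rw [hlabu]; exact Finset.mem_insert_of_mem hbΓ, hxb⟩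
        · refine ⟨a ++ [x'], ?_, List.mem_append.2 (Or.inr (by simp))⟩
          rw [hlabu]; exact Finset.mem_insert_self _ _
      · rcases hψ with ⟨b, hb, hxb⟩ | ⟨hveq', -⟩
        · rw [hlabv] at hb
          rcases Finset.mem_insert.1 hb with heq | hbΓ
          · obtain ⟨rfl, rfl⟩ := Prod.ext_iff.1 heq.symm
            refine ⟨a ++ [x'], ?_, List.mem_append.2 (Or.inl hxb)⟩
            rw [hlabu]; exact Finset.mem_insert_self _ _
          · exact ⟨b, by rw [hlabu]; exact Finset.mem_insert_of_mem hbΓ, hxb⟩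
        · exact absurd hveq' hveq

end CloDeriv

end Aux10

/-- Replacing every clo rule of the infinite unfolding of a Clo
proof of Γ by a ν-unfolding rule, removing all exp nodes and erasing all
annotations yields an NW derivation of Γ that is an NW proof: every infinite
branch carries a ν-trace. -/
theorem unfolded_strip_is_nw_proof (Γ : Sequent) (hΓ : ClosedSeq Γ)
    (ρ : CloDeriv false (annSeq Γ)) (hfin : ρ.tree.Finite)
    (π : NWDeriv Γ) (h : IsUnfoldedStrip ρ π) :
    π.IsProof := by
  classical
  haveI : Inhabited Formula := ⟨.prop 0⟩
  obtain ⟨F, hroot, hmem, hlab, hrule, hres⟩ := h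
  intro br hbr
  -- basic facts about the branch
  have hUstep : ∀ n, branchNode br (n + 1) = branchNode br n ++ [br n] := by
    intro n; simp [branchNode, List.range_succ]
  have hUt : ∀ n, branchNode br n ∈ π.tree := hbr
  have hFt : ∀ n, F (branchNode br n) ∈ ρ.tree := fun n => hmem _ (hUt n)
  have hres' : ∀ n, ρ.Resolves (F (branchNode br n) ++ [br n])
      (F (branchNode br (n + 1))) := by
    intro n
    have h1 := hres _ (hUt n) (br n) (by rw [← hUstep]; exact hUt (n + 1))
    rw [← hUstep n] at h1
    exact h1
  -- the tree of ρ has bounded depth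
  obtain ⟨B, hB⟩ : ∃ B, ∀ w ∈ ρ.tree, w.length ≤ B :=
    ⟨hfin.toFinset.sup List.length,
      fun w hw => Finset.le_sup (hfin.mem_toFinset.2 hw)⟩
  -- jump steps
  set SJ : ℕ → Prop :=
    fun n => ¬ (F (branchNode br n) ++ [br n] <+: F (branchNode br (n + 1))) with hSJ
  -- there are infinitely many jump steps
  have hSinf : ∀ N, ∃ n, N ≤ n ∧ SJ n := by
    intro N
    by_contra hcon
    push_neg at hcon
    have hgrow : ∀ k,
        (F (branchNode br N)).length + k ≤ (F (branchNode br (N + k))).length := by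
      intro k
      induction k with
      | zero => simp
      | succ k ih =>
          have hp : F (branchNode br (N + k)) ++ [br (N + k)] <+:
              F (branchNode br (N + k + 1)) := by
            have := hcon (N + k) (by omega)
            rw [hSJ] at this
            exact not_not.1 this
          have h2 := hp.length_le
          rw [List.length_append] at h2
          simp at h2
          have : N + (k + 1) = N + k + 1 := by omega
          rw [this]
          omega
    have h1 := hgrow (B + 1)
    have h2 := hB _ (hFt (N + (B + 1)))
    omega
  -- jump targets hit infinitely often
  set Fib : List ℕ → Prop :=
    fun v => ∀ N, ∃ n, N ≤ n ∧ SJ n ∧ F (branchNode br (n + 1)) = v with hFibdef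
  have hFibex : ∃ v ∈ hfin.toFinset, Fib v := by
    by_contra hcon
    push_neg at hcon
    have hch : ∀ v, ∃ N, v ∈ hfin.toFinset →
        ∀ n, N ≤ n → ¬ (SJ n ∧ F (branchNode br (n + 1)) = v) := by
      intro v
      by_cases hv : v ∈ hfin.toFinset
      · have h0 : ¬ ∀ N : ℕ, ∃ n, N ≤ n ∧ SJ n ∧ F (branchNode br (n + 1)) = v :=
          hcon v hv
        push_neg at h0
        obtain ⟨N, hN⟩ := h0
        refine ⟨N, fun _ n hn hc => ?_⟩
        exact hN n hn hc.1 hc.2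
      · exact ⟨0, fun hmem' => absurd hmem' hv⟩
    choose NF hNF using hch
    obtain ⟨n, hn1, hn2⟩ := hSinf (hfin.toFinset.sup NF)
    have hvt : F (branchNode br (n + 1)) ∈ hfin.toFinset :=
      hfin.mem_toFinset.2 (hFt (n + 1))
    exact hNF _ hvt n (le_trans (Finset.le_sup hvt) hn1) ⟨hn2, rfl⟩
  -- choose a jump target of minimal length hit infinitely often
  obtain ⟨v₁, hv₁t, hv₁F⟩ := hFibex
  obtain ⟨vs, hvsVS, hvsmin⟩ :=
    Finset.exists_min_image (hfin.toFinset.filter (fun v => Fib v)) List.length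
      ⟨v₁, Finset.mem_filter.2 ⟨hv₁t, hv₁F⟩⟩
  have hvsFib : Fib vs := (Finset.mem_filter.1 hvsVS).2
  -- beyond some point, all jumps land on infinitely-hit targets
  obtain ⟨N₀, hN₀⟩ : ∃ N₀, ∀ n, N₀ ≤ n → SJ n → Fib (F (branchNode br (n + 1))) := by
    have hch : ∀ v, ∃ N, (v ∈ hfin.toFinset ∧ ¬ Fib v) →
        ∀ n, N ≤ n → ¬ (SJ n ∧ F (branchNode br (n + 1)) = v) := by
      intro v
      by_cases hv : v ∈ hfin.toFinset ∧ ¬ Fib v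
      · have h0 : ¬ ∀ N : ℕ, ∃ n, N ≤ n ∧ SJ n ∧ F (branchNode br (n + 1)) = v :=
          hv.2
        push_neg at h0
        obtain ⟨N, hN⟩ := h0
        refine ⟨N, fun _ n hn hc => ?_⟩
        exact hN n hn hc.1 hc.2
      · exact ⟨0, fun hmem' => absurd hmem' hv⟩
    choose NF2 hNF2 using hch
    refine ⟨hfin.toFinset.sup NF2, fun n hn hsj => ?_⟩
    by_contra hnF
    have hvt : F (branchNode br (n + 1)) ∈ hfin.toFinset :=
      hfin.mem_toFinset.2 (hFt (n + 1))
    exact hNF2 _ ⟨hvt, hnF⟩ n (le_trans (Finset.le_sup hvt) hn) ⟨hsj, rfl⟩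
  -- a jump step landing on vs, beyond N₀
  obtain ⟨N₁, hN₁ge, hN₁S, hN₁v⟩ :
      ∃ n, N₀ ≤ n ∧ SJ n ∧ F (branchNode br (n + 1)) = vs := hvsFib N₀
  -- the rule at vs is a clo rule
  have hvst : vs ∈ ρ.tree := hN₁v ▸ hFt (N₁ + 1)
  obtain ⟨Γ₀, x₀, φ₀, a₀, x₀', hrvs⟩ :
      ∃ Γ₀ x₀ φ₀ a₀ x₀', ρ.rule vs = .clo Γ₀ x₀ φ₀ a₀ x₀' := by
    rcases CloDeriv.resolves_cases (hres' N₁) with hp | ⟨u₀, Γ', x', φ', a', y', h1, h2, h3, h4, h5, h6⟩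
    · exact absurd hp hN₁S
    · rw [hN₁v] at h6
      exact ⟨_, _, _, _, _, h6⟩
  have hfresh : NameFresh x₀' Γ₀ := by
    have hok := ρ.ok vs hvst
    rw [hrvs] at hok
    exact hok.2.2
  have hlabvs : ρ.label vs = insert (Formula.nu x₀ φ₀, a₀) Γ₀ := by
    rw [ρ.label_concl vs hvst, hrvs]; rfl
  -- beyond N₁, the branch stays in the subtree of vs
  have hsub : ∀ n, N₁ + 1 ≤ n → vs <+: F (branchNode br n) := by
    intro n hn
    induction n, hn using Nat.le_induction with
    | base => rw [hN₁v]
    | succ n hn ih =>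
        have hext : F (branchNode br n) <+: F (branchNode br n) ++ [br n] :=
          ⟨[br n], rfl⟩
        by_cases hsj : SJ n
        · rcases CloDeriv.resolves_cases (hres' n) with hp |
            ⟨u₀, Γ', x', φ', a', y', h1, h2, h3, h4, h5, h6⟩
          · exact ih.trans (hext.trans hp)
          · have hFib2 : Fib (F (branchNode br (n + 1))) := hN₀ n (by omega) hsj
            have hmemVS : F (branchNode br (n + 1)) ∈
                hfin.toFinset.filter (fun v => Fib v) :=
              Finset.mem_filter.2 ⟨hfin.mem_toFinset.2 (hFt (n + 1)), hFib2⟩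
            have hlen : vs.length ≤ (F (branchNode br (n + 1))).length :=
              hvsmin _ hmemVS
            have hc1 : vs <+: u₀ := (ih.trans hext).trans h1
            rcases List.prefix_or_prefix_of_prefix hc1 h4 with hp1 | hp2
            · exact hp1
            · have hq : F (branchNode br (n + 1)) = vs :=
                List.IsPrefix.eq_of_length hp2 (le_antisymm hp2.length_le hlen)
              rw [hq]
        · have hp : F (branchNode br n) ++ [br n] <+: F (branchNode br (n + 1)) := by
            rw [hSJ] at hsj
            exact not_not.1 hsj
          exact ih.trans (hext.trans hp)
  -- infinitely many visit positions
  have hvisit : ∀ N, ∃ n, N ≤ n ∧ N₁ + 1 ≤ n ∧ F (branchNode br n) = vs := by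
    intro N
    obtain ⟨n, hn1, -, hn3⟩ := hvsFib (max N (N₁ + 1))
    exact ⟨n + 1, by omega, by omega, hn3⟩
  -- the trace pull-back step
  have hstepL : ∀ n, N₁ + 1 ≤ n → ∀ ψ' : Formula,
      ((F (branchNode br (n + 1)) = vs ∧ ψ' = .nu x₀ φ₀) ∨
        (F (branchNode br (n + 1)) ≠ vs ∧
          ∃ b, (ψ', b) ∈ ρ.label (F (branchNode br (n + 1))) ∧ x₀' ∈ b)) →
      ∃ ψ : Formula,
        ((F (branchNode br n) = vs ∧ ψ = .nu x₀ φ₀) ∨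
          (F (branchNode br n) ≠ vs ∧
            ∃ b, (ψ, b) ∈ ρ.label (F (branchNode br n)) ∧ x₀' ∈ b)) ∧
        (π.rule (branchNode br n)).descends (br n) ψ ψ' := by
    intro n hn ψ' hψ'
    have hpre : vs <+: F (branchNode br n) := hsub n hn
    have hc : vs <+: F (branchNode br n) ++ [br n] := hpre.trans ⟨[br n], rfl⟩
    have hcne : F (branchNode br n) ++ [br n] ≠ vs := by
      intro hc'
      have h1 := hpre.length_le
      have h2 : (F (branchNode br n) ++ [br n]).length =
          (F (branchNode br n)).length + 1 := by simp
      rw [hc'] at h2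
      omega
    have htarget : (∃ b, (ψ', b) ∈ ρ.label (F (branchNode br (n + 1))) ∧ x₀' ∈ b) ∨
        (F (branchNode br (n + 1)) = vs ∧ ψ' = .nu x₀ φ₀) := by
      rcases hψ' with ⟨h1, h2⟩ | ⟨h1, h2⟩
      · exact Or.inr ⟨h1, h2⟩
      · exact Or.inl h2
    obtain ⟨b', hb', hxb'⟩ :=
      CloDeriv.resolves_carrier hrvs hfresh (hres' n) hc hcne ψ' htarget
    have hct : F (branchNode br n) ++ [br n] ∈ ρ.tree :=
      CloDeriv.resolves_head (hres' n)
    have hlt : br n < (ρ.rule (F (branchNode br n))).prems.length :=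
      (ρ.child_iff _ (hFt n) (br n)).1 hct
    have hlabc : ρ.label (F (branchNode br n) ++ [br n]) =
        (ρ.rule (F (branchNode br n))).prems.get ⟨br n, hlt⟩ :=
      ρ.label_child _ (hFt n) _ hlt
    rw [hlabc] at hb'
    have hstrip := hrule _ (hUt n)
    obtain ⟨ψ, b, hmemc, hdesc, hor⟩ := clo_pullback hstrip x₀' (br n) hlt hb' hxb'
    have hmeml : (ψ, b) ∈ ρ.label (F (branchNode br n)) := by
      rw [ρ.label_concl _ (hFt n)]; exact hmemc
    have hnw : (π.rule (branchNode br n)).descends (br n) ψ ψ' :=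
      strip_descends hstrip hdesc
    by_cases hveq : F (branchNode br n) = vs
    · have hψeq : ψ = .nu x₀ φ₀ := by
        rcases hor with hxin | ⟨Γ', z, χ, cc, hrr, hψz, -⟩
        · rw [hveq, hlabvs] at hmeml
          rcases Finset.mem_insert.1 hmeml with heq | hmemΓ
          · exact congrArg Prod.fst heq
          · exact absurd hxin (hfresh _ hmemΓ)
        · rw [hveq, hrvs] at hrr
          injection hrr with e1 e2 e3 e4 e5
          rw [hψz, e2, e3]
      refine ⟨.nu x₀ φ₀, Or.inl ⟨hveq, rfl⟩, ?_⟩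
      rw [← hψeq]
      exact hnw
    · refine ⟨ψ, Or.inr ⟨hveq, b, hmeml, ?_⟩, hnw⟩
      rcases hor with hxin | ⟨Γ', z, χ, cc, hrr, -, -⟩
      · exact hxin
      · exfalso
        have htok : (ρ.rule (F (branchNode br n))).cloToken = some x₀' := by
          rw [hrr]; rfl
        have htok2 : (ρ.rule vs).cloToken = some x₀' := by rw [hrvs]; rfl
        exact hveq (ρ.token_unique _ (hFt n) _ hvst _ htok htok2)
  -- goodness implies membership in the NW sequent
  have hmemlab : ∀ n (ψ : Formula),
      ((F (branchNode br n) = vs ∧ ψ = .nu x₀ φ₀) ∨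
        (F (branchNode br n) ≠ vs ∧
          ∃ b, (ψ, b) ∈ ρ.label (F (branchNode br n)) ∧ x₀' ∈ b)) →
      ψ ∈ π.label (branchNode br n) := by
    intro n ψ hg
    rw [← hlab _ (hUt n)]
    rcases hg with ⟨hv, rfl⟩ | ⟨-, b, hb, -⟩
    · rw [hv, hlabvs]
      exact mem_stripSeq (Finset.mem_insert_self _ _)
    · exact mem_stripSeq hb
  -- finite backward traces from a visit
  have hFT : ∀ d m, N₁ + 1 ≤ m → F (branchNode br (m + d)) = vs →
      ∃ h : ℕ → Formula, h (m + d) = .nu x₀ φ₀ ∧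
        (∀ n, m ≤ n → n ≤ m + d →
          ((F (branchNode br n) = vs ∧ h n = .nu x₀ φ₀) ∨
            (F (branchNode br n) ≠ vs ∧
              ∃ b, (h n, b) ∈ ρ.label (F (branchNode br n)) ∧ x₀' ∈ b))) ∧
        (∀ n, m ≤ n → n < m + d →
          (π.rule (branchNode br n)).descends (br n) (h n) (h (n + 1))) := by
    intro d
    induction d with
    | zero =>
        intro m hm hv
        refine ⟨fun _ => .nu x₀ φ₀, rfl, ?_, ?_⟩
        · intro n h1 h2
          have hnm : n = m := by omega
          subst hnm
          exact Or.inl ⟨hv, rfl⟩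
        · intro n h1 h2
          omega
    | succ d ih =>
        intro m hm hv
        have hv' : F (branchNode br ((m + 1) + d)) = vs := by
          rw [show (m + 1) + d = m + (d + 1) from by omega]
          exact hv
        obtain ⟨h, hend, hgood, hdesc⟩ := ih (m + 1) (by omega) hv'
        obtain ⟨ψ, hgψ, hdψ⟩ := hstepL m hm (h (m + 1))
          (hgood (m + 1) le_rfl (by omega))
        refine ⟨fun n => if n = m then ψ else h n, ?_, ?_, ?_⟩
        · have hne : m + (d + 1) ≠ m := by omega
          simp only [if_neg hne]
          rw [show m + (d + 1) = (m + 1) + d from by omega]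
          exact hend
        · intro n h1 h2
          by_cases hnm : n = m
          · subst hnm
            simp only [if_pos rfl]
            exact hgψ
          · simp only [if_neg hnm]
            exact hgood n (by omega) (by omega)
        · intro n h1 h2
          by_cases hnm : n = m
          · subst hnm
            simp only [if_pos rfl, if_neg (show n + 1 ≠ n from by omega)]
            exact hdψ
          · simp only [if_neg hnm, if_neg (show n + 1 ≠ m from by omega)]
            exact hdesc n (by omega) (by omega)
  -- full backward traces from a visit, starting at N₁ + 1
  have hHex : ∀ v : ℕ, (N₁ + 1 ≤ v ∧ F (branchNode br v) = vs) →
      ∃ h : ℕ → Formula, h v = .nu x₀ φ₀ ∧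
        (∀ n, N₁ + 1 ≤ n → n ≤ v →
          ((F (branchNode br n) = vs ∧ h n = .nu x₀ φ₀) ∨
            (F (branchNode br n) ≠ vs ∧
              ∃ b, (h n, b) ∈ ρ.label (F (branchNode br n)) ∧ x₀' ∈ b))) ∧
        (∀ n, N₁ + 1 ≤ n → n < v →
          (π.rule (branchNode br n)).descends (br n) (h n) (h (n + 1))) := by
    rintro v ⟨hv1, hv2⟩
    have heq : N₁ + 1 + (v - (N₁ + 1)) = v := by omega
    obtain ⟨h, h1, h2, h3⟩ := hFT (v - (N₁ + 1)) (N₁ + 1) le_rfl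
      (by rw [heq]; exact hv2)
    rw [heq] at h1 h2 h3
    exact ⟨h, h1, h2, h3⟩
  choose! HH hH1 hH2 hH3 using hHex
  -- next visit
  have hex : ∀ m, ∃ n, m ≤ n ∧ (N₁ + 1 ≤ n ∧ F (branchNode br n) = vs) := by
    intro m
    obtain ⟨n, h1, h2, h3⟩ := hvisit m
    exact ⟨n, h1, h2, h3⟩
  set nv : ℕ → ℕ := fun m => Nat.find (hex m) with hnvdef
  have hnv1 : ∀ m, m ≤ nv m := fun m => (Nat.find_spec (hex m)).1
  have hnv2 : ∀ m, N₁ + 1 ≤ nv m ∧ F (branchNode br (nv m)) = vs :=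
    fun m => (Nat.find_spec (hex m)).2
  have hnvmin : ∀ m n, m ≤ n → N₁ + 1 ≤ n → F (branchNode br n) = vs → nv m ≤ n :=
    fun m n h1 h2 h3 => Nat.find_min' _ ⟨h1, h2, h3⟩
  have hnveq : ∀ m, N₁ + 1 ≤ m → F (branchNode br m) = vs → nv m = m :=
    fun m h1 h2 => le_antisymm (hnvmin m m le_rfl h1 h2) (hnv1 m)
  have hnvsucc : ∀ m, F (branchNode br m) ≠ vs → nv m = nv (m + 1) := by
    intro m hne
    have h1 : nv m ≤ nv (m + 1) :=
      hnvmin m _ (le_trans (by omega) (hnv1 (m + 1))) (hnv2 (m + 1)).1 (hnv2 (m + 1)).2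
    have hmne : nv m ≠ m := fun hcon => hne (hcon ▸ (hnv2 m).2)
    have h2 : nv (m + 1) ≤ nv m := by
      apply hnvmin
      · have := hnv1 m; omega
      · exact (hnv2 m).1
      · exact (hnv2 m).2
    omega
  -- key facts about the glued trace
  have hgood_g : ∀ m, N₁ + 1 ≤ m →
      ((F (branchNode br m) = vs ∧ HH (nv m) m = .nu x₀ φ₀) ∨
        (F (branchNode br m) ≠ vs ∧
          ∃ b, (HH (nv m) m, b) ∈ ρ.label (F (branchNode br m)) ∧ x₀' ∈ b)) :=
    fun m hm => hH2 (nv m) (hnv2 m) m hm (hnv1 m)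
  have hdesc_g : ∀ m, N₁ + 1 ≤ m →
      (π.rule (branchNode br m)).descends (br m) (HH (nv m) m)
        (HH (nv (m + 1)) (m + 1)) := by
    intro m hm
    by_cases hveq : F (branchNode br m) = vs
    · have hnvm : nv m = m := hnveq m hm hveq
      have hval : HH (nv m) m = .nu x₀ φ₀ := by
        rw [hnvm]; exact hH1 m ⟨hm, hveq⟩
      have hp' := hnv2 (m + 1)
      have hmv' : m < nv (m + 1) := lt_of_lt_of_le (by omega) (hnv1 (m + 1))
      have hd := hH3 (nv (m + 1)) hp' m hm hmv'
      have hg := hH2 (nv (m + 1)) hp' m hm (le_of_lt hmv')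
      have hval2 : HH (nv (m + 1)) m = .nu x₀ φ₀ := by
        rcases hg with ⟨-, hh⟩ | ⟨hne, -⟩
        · exact hh
        · exact absurd hveq hne
      rw [hval, ← hval2]
      exact hd
    · have hnvm : nv m = nv (m + 1) := hnvsucc m hveq
      have hp := hnv2 (m + 1)
      have hmlt : m < nv (m + 1) := lt_of_lt_of_le (by omega) (hnv1 (m + 1))
      have hd := hH3 (nv (m + 1)) hp m hm hmlt
      rw [hnvm]
      exact hd
  -- assemble the trace
  refine ⟨nv 0, fun j => HH (nv (nv 0 + j)) (nv 0 + j), ?_, ?_⟩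
  · intro j
    have hj : N₁ + 1 ≤ nv 0 + j := le_trans (hnv2 0).1 (by omega)
    exact ⟨hmemlab _ _ (hgood_g _ hj), hdesc_g _ hj⟩
  · refine ⟨x₀, φ₀, ?_, ?_⟩
    · intro N
      obtain ⟨n, h1, h2, h3⟩ := hvisit (nv 0 + N)
      refine ⟨n - nv 0, by omega, ?_⟩
      have heqn : nv 0 + (n - nv 0) = n := by omega
      show HH (nv (nv 0 + (n - nv 0))) (nv 0 + (n - nv 0)) = _
      rw [heqn, hnveq n h2 h3]
      exact hH1 n ⟨h2, h3⟩
    · have hclosall : ∀ j,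
          HH (nv (nv 0 + j)) (nv 0 + j) ∈ Clos {Formula.nu x₀ φ₀} := by
        intro j
        induction j with
        | zero =>
            have hz : HH (nv (nv 0 + 0)) (nv 0 + 0) = .nu x₀ φ₀ := by
              show HH (nv (nv 0)) (nv 0) = _
              rw [hnveq (nv 0) (hnv2 0).1 (hnv2 0).2]
              exact hH1 (nv 0) ⟨(hnv2 0).1, (hnv2 0).2⟩
            rw [hz]
            exact ⟨_, Finset.mem_singleton_self _, Relation.ReflTransGen.refl⟩
        | succ j ih =>
            have hj : N₁ + 1 ≤ nv 0 + j := le_trans (hnv2 0).1 (by omega)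
            have hd := hdesc_g _ hj
            rcases nw_descends_tstep hd with heq | hts
            · show HH (nv (nv 0 + j + 1)) (nv 0 + j + 1) ∈ _
              rw [heq]
              exact ih
            · obtain ⟨θ, hθ, hrt⟩ := ih
              exact ⟨θ, hθ, hrt.tail hts⟩
      intro ψ hψ
      obtain ⟨j, -, hj⟩ := hψ 0
      exact hj ▸ hclosall j
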